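/- arXiv:1503.01955 — 5 statements merged into one kernel-verified Lean document; each statement's English description precedes it below -/
import Mathlib

section
/- Let C₀ ⊆ F_q^d be a linear code whose minimum distance is greater than δ₀·d (equivalently, C₀ can recover from any δ₀·d erasures), and let H be a d-regular graph on n vertices with normalized second eigenvalue at most λ. Let k > 0 be a real number with λ < δ₀ − 2/k. Then for any choice of edge orderings, any two codewords of the Tanner code C(H, C₀) that agree on all but at most (δ₀/k)·(nd/2) edges of H are equal; in other words, the Tanner code can be recovered from any (δ₀/k) fraction of erasures. -/
/-- A code `C ⊆ Fⁿ` (here indexed by a finite type `ι`, over a finite alphabet `F`) is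
`(α, ℓ, L)`-list recoverable from erasures: for every family of sets `S i ⊆ F` such that
there is a set `T` with `|T| ≥ α·|ι|`, `|S i| ≤ ℓ` for `i ∈ T` and `S i = F` for `i ∉ T`,
there are at most `L` codewords `c ∈ C` with `c i ∈ S i` for all `i`. -/
def ListRecoverableErasures {ι F : Type*} [Fintype ι] [Fintype F]
    (C : Set (ι → F)) (α : ℝ) (ℓ L : ℕ) : Prop :=
  ∀ (S : ι → Finset F) (T : Finset ι),
    α * (Fintype.card ι : ℝ) ≤ (T.card : ℝ) →
    (∀ i ∈ T, (S i).card ≤ ℓ) →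
    (∀ i ∉ T, S i = Finset.univ) →
    {c ∈ C | ∀ i, c i ∈ S i}.ncard ≤ L

/-- A `d`-regular graph `G` on `n` vertices has normalized second eigenvalue at most `lam`:
for every vector `x` summing to `0`, `‖Ax‖₂ ≤ lam · d · ‖x‖₂`. -/
def NormSecondEigenvalueLE {n : ℕ} (G : SimpleGraph (Fin n)) [DecidableRel G.Adj]
    (d : ℕ) (lam : ℝ) : Prop :=
  ∀ x : Fin n → ℝ, (∑ v, x v = 0) →
    Real.sqrt (∑ v, ((G.adjMatrix ℝ).mulVec x v) ^ 2) ≤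
      lam * d * Real.sqrt (∑ v, (x v) ^ 2)

/-- The edge of `G` at `v` towards the neighbor `u`, as an element of the edge set. -/
def edgeAt {n : ℕ} (G : SimpleGraph (Fin n)) (v : Fin n) (u : G.neighborSet v) :
    G.edgeSet := ⟨s(v, (u : Fin n)), u.2⟩

/-- The local codeword of `x` at vertex `v`, read off via the edge ordering `ord`. -/
def localWord {n d : ℕ} {F : Type*} [Field F] (G : SimpleGraph (Fin n))
    (ord : ∀ v : Fin n, Fin d ≃ G.neighborSet v)
    (x : G.edgeSet → F) (v : Fin n) : Fin d → F :=
  fun i => x (edgeAt G v (ord v i))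

/-- The Tanner code `C(H, C₀)`: assignments of symbols to the edges of `G` such that at
every vertex, the local word (in the given edge ordering) lies in the inner code `C₀`. -/
def tannerCode {n d : ℕ} {F : Type*} [Field F] (G : SimpleGraph (Fin n))
    (ord : ∀ v : Fin n, Fin d ≃ G.neighborSet v)
    (C₀ : Submodule F (Fin d → F)) : Submodule F (G.edgeSet → F) where
  carrier := {x | ∀ v : Fin n, localWord G ord x v ∈ C₀}
  add_mem' := fun hx hy v => C₀.add_mem (hx v) (hy v)
  zero_mem' := fun _ => C₀.zero_mem
  smul_mem' := fun a _ hx v => C₀.smul_mem a (hx v)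

/-!
Let `H` be the graph of edges on which two Tanner codewords `x ≠ y` disagree and `S` its set of
non-isolated vertices. At `v ∈ S` the local words differ, so by the distance of `C₀` the vertex
`v` has more than `δ₀ d` incident `H`-edges, all leading into `S`. Counting these incidences
against the at most `(δ₀ / k) (n d / 2)` edges of `H` gives `|S| < n / k`; counting them against
the edges of `G` inside `S` and applying the expander mixing bound
`2 e(S, S) ≤ λ d |S| + d |S|² / n` gives `δ₀ < λ + |S| / n`. Together, `δ₀ < λ + 1 / k`,
contradicting `λ < δ₀ - 2 / k`.
-/

open Finset

namespace SimpleGraph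

variable {V F : Type*} (G : SimpleGraph V)

def disagreementGraph (x y : G.edgeSet → F) : SimpleGraph V :=
  fromEdgeSet (Subtype.val '' {e | x e ≠ y e})

variable {G} {x y : G.edgeSet → F}

theorem disagreementGraph_adj {u v : V} :
    (G.disagreementGraph x y).Adj u v ↔
      ∃ h : G.Adj u v, x ⟨s(u, v), h⟩ ≠ y ⟨s(u, v), h⟩ := by
  simp only [disagreementGraph, fromEdgeSet_adj, Set.mem_image, Set.mem_ofPred_eq]
  constructor
  · rintro ⟨⟨⟨e, he⟩, hne, rfl⟩, -⟩
    exact ⟨he, hne⟩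
  · rintro ⟨h, hne⟩
    exact ⟨⟨_, hne, rfl⟩, G.ne_of_adj h⟩

theorem exists_adj_disagreementGraph (h : x ≠ y) :
    ∃ a b, (G.disagreementGraph x y).Adj a b := by
  obtain ⟨⟨e, he⟩, hne⟩ := Function.ne_iff.1 h
  induction e using Sym2.ind with
  | _ a b => exact ⟨a, b, disagreementGraph_adj.2 ⟨he, hne⟩⟩

instance [DecidableRel G.Adj] [DecidableEq F] : DecidableRel (G.disagreementGraph x y).Adj :=
  fun _ _ => decidable_of_iff _ disagreementGraph_adj.symm

theorem disagreementGraph_le : G.disagreementGraph x y ≤ G :=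
  fun _ _ h => (disagreementGraph_adj.1 h).1

theorem card_edgeFinset_disagreementGraph [Fintype (G.disagreementGraph x y).edgeSet] :
    #(G.disagreementGraph x y).edgeFinset = {e | x e ≠ y e}.ncard := by
  have hdiag : Disjoint (Subtype.val '' {e : G.edgeSet | x e ≠ y e}) Sym2.diagSet := by
    rw [Set.disjoint_left]
    rintro _ ⟨e, -, rfl⟩
    exact G.not_isDiag_of_mem_edgeSet e.2
  rw [← Set.ncard_coe_finset, coe_edgeFinset, disagreementGraph, edgeSet_fromEdgeSet,
    hdiag.sdiff_eq_left, Set.ncard_image_of_injective _ Subtype.val_injective]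

variable [Fintype V] {H : SimpleGraph V} [DecidableRel H.Adj]

theorem sum_degree_support_eq_twice_card_edges :
    ∑ v ∈ H.support.toFinset, H.degree v = 2 * #H.edgeFinset := by
  rw [sum_subset (subset_univ _) fun v _ hv => ?_, H.sum_degrees_eq_twice_card_edges]
  rwa [degree_eq_zero_iff_notMem_support, ← Set.mem_toFinset]

theorem mul_card_support_lt_sum_degree {c : ℝ} (hdeg : ∀ v ∈ H.support, c < H.degree v)
    (hH : H.support.Nonempty) :
    c * #H.support.toFinset < ∑ v ∈ H.support.toFinset, (H.degree v : ℝ) := by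
  rw [mul_comm, ← nsmul_eq_mul, ← sum_const]
  exact sum_lt_sum_of_nonempty (Set.toFinset_nonempty.2 hH) fun v hv =>
    hdeg v (Set.mem_toFinset.1 hv)

theorem degree_le_card_neighborFinset_inter_support [DecidableEq V] [DecidableRel G.Adj]
    (hHG : H ≤ G) (v : V) : H.degree v ≤ #(G.neighborFinset v ∩ H.support.toFinset) := by
  refine card_le_card fun u hu => ?_
  rw [mem_neighborFinset] at hu
  rw [mem_inter, mem_neighborFinset, Set.mem_toFinset]
  exact ⟨hHG hu, hu.symm.degree_pos_left |> (H.degree_pos_iff_mem_support u).1⟩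

end SimpleGraph

open SimpleGraph

section Spectral

variable {n d : ℕ} {G : SimpleGraph (Fin n)} [DecidableRel G.Adj] {lam : ℝ}

theorem NormSecondEigenvalueLE.mul_nonneg (heig : NormSecondEigenvalueLE G d lam)
    {a b : Fin n} (hab : a ≠ b) : 0 ≤ lam * d := by
  set z : Fin n → ℝ := Pi.single a 1 - Pi.single b 1
  have hz : ∑ v, z v = 0 := by simp [z, sum_sub_distrib]
  have hz_pos : 0 < √(∑ v, z v ^ 2) :=
    Real.sqrt_pos.2 (sum_pos' (fun _ _ => sq_nonneg _) ⟨a, mem_univ a, by simp [z, hab]⟩)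
  refine le_of_mul_le_mul_right ?_ hz_pos
  rw [zero_mul]
  exact (Real.sqrt_nonneg _).trans (heig z hz)

theorem NormSecondEigenvalueLE.sum_card_neighborFinset_inter_le (hreg : G.IsRegularOfDegree d)
    (heig : NormSecondEigenvalueLE G d lam) (hlam : 0 ≤ lam * d) (S : Finset (Fin n)) :
    ∑ v ∈ S, (#(G.neighborFinset v ∩ S) : ℝ) ≤ lam * d * #S + d * #S ^ 2 / n := by
  rcases n.eq_zero_or_pos with rfl | hn
  · simp [S.eq_empty_of_isEmpty]
  set s : ℝ := (#S : ℝ)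
  set g : Fin n → ℝ := fun v => if v ∈ S then 1 else 0
  set f : Fin n → ℝ := fun v => g v - s / n
  have hg_sum : ∑ v, g v = s := by simp [g, s]
  have hg_sq : ∑ v, g v ^ 2 = s := by simp [g, s]
  have hf_sum : ∑ v, f v = 0 := by
    simp only [f, sum_sub_distrib, hg_sum, sum_const, card_univ, Fintype.card_fin, nsmul_eq_mul]
    field_simp
    ring
  have hf_sq : ∑ v, f v ^ 2 = s - s ^ 2 / n := by
    simp only [f, sub_sq, sum_add_distrib, sum_sub_distrib, hg_sq, ← sum_mul, ← mul_sum, hg_sum,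
      sum_const, card_univ, Fintype.card_fin, nsmul_eq_mul]
    field_simp
    ring
  have hAf : ∀ v, (G.adjMatrix ℝ).mulVec f v = #(G.neighborFinset v ∩ S) - d * (s / n) := by
    intro v
    simp [f, g, sum_sub_distrib, hreg v]
  have hcs : ∑ v ∈ S, (G.adjMatrix ℝ).mulVec f v ≤ lam * d * s := calc
    _ = ∑ v, g v * (G.adjMatrix ℝ).mulVec f v := by simp [g]
    _ ≤ √(∑ v, g v ^ 2) * √(∑ v, (G.adjMatrix ℝ).mulVec f v ^ 2) :=
      Real.sum_mul_le_sqrt_mul_sqrt _ _ _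
    _ ≤ √s * (lam * d * √s) := by
      rw [hg_sq]
      refine mul_le_mul_of_nonneg_left ((heig f hf_sum).trans ?_) (Real.sqrt_nonneg _)
      exact mul_le_mul_of_nonneg_left
        (Real.sqrt_le_sqrt (hf_sq.trans_le (sub_le_self _ (by positivity)))) hlam
    _ = lam * d * s := by rw [mul_left_comm, Real.mul_self_sqrt (by positivity)]
  calc ∑ v ∈ S, (#(G.neighborFinset v ∩ S) : ℝ)
      = ∑ v ∈ S, (G.adjMatrix ℝ).mulVec f v + d * s ^ 2 / n := by
        simp only [hAf, sum_sub_distrib, sum_const, nsmul_eq_mul]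
        ring
    _ ≤ lam * d * s + d * s ^ 2 / n := by linarith

theorem NormSecondEigenvalueLE.lt_add_card_support_div {H : SimpleGraph (Fin n)}
    [DecidableRel H.Adj] (hreg : G.IsRegularOfDegree d) (heig : NormSecondEigenvalueLE G d lam)
    (hHG : H ≤ G) {c : ℝ} (hdeg : ∀ v ∈ H.support, c < H.degree v) {a b : Fin n}
    (hab : H.Adj a b) :
    c < lam * d + d * #H.support.toFinset / n := by
  set S := H.support.toFinset
  have hH : H.support.Nonempty := ⟨a, b, hab⟩
  have hS : (0 : ℝ) < #S := by
    exact_mod_cast card_pos.2 (Set.toFinset_nonempty.2 hH)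
  have hmix := heig.sum_card_neighborFinset_inter_le hreg (heig.mul_nonneg (hHG hab).ne) S
  refine lt_of_mul_lt_mul_right ?_ hS.le
  calc c * #S < ∑ v ∈ S, (H.degree v : ℝ) := mul_card_support_lt_sum_degree hdeg hH
    _ ≤ ∑ v ∈ S, (#(G.neighborFinset v ∩ S) : ℝ) :=
      sum_le_sum fun v _ => by exact_mod_cast degree_le_card_neighborFinset_inter_support hHG v
    _ ≤ (lam * d + d * #S / n) * #S := hmix.trans_eq (by ring)

end Spectral

section Tanner

variable {n d : ℕ} {F : Type*} [Field F] [DecidableEq F] {G : SimpleGraph (Fin n)}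
  [DecidableRel G.Adj]

theorem hammingDist_localWord (ord : ∀ v : Fin n, Fin d ≃ G.neighborSet v)
    (x y : G.edgeSet → F) (v : Fin n) :
    hammingDist (localWord G ord x v) (localWord G ord y v) =
      (G.disagreementGraph x y).degree v := by
  rw [← card_neighborFinset_eq_degree, hammingDist]
  refine card_bij (fun i _ => (ord v i : Fin n)) (fun i hi => ?_)
    (fun i _ j _ h => (ord v).injective (Subtype.ext h)) (fun u hu => ?_)
  · rw [mem_neighborFinset, disagreementGraph_adj]
    exact ⟨(ord v i).2, (mem_filter.1 hi).2⟩
  · obtain ⟨h, hne⟩ := disagreementGraph_adj.1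
      ((mem_neighborFinset _ _ _).1 hu)
    refine ⟨(ord v).symm ⟨u, h⟩, mem_filter.2 ⟨mem_univ _, ?_⟩, by simp⟩
    simpa [localWord, edgeAt]

theorem lt_degree_disagreementGraph {ord : ∀ v : Fin n, Fin d ≃ G.neighborSet v}
    {C₀ : Submodule F (Fin d → F)} {δ₀ : ℝ}
    (hdist : ∀ c ∈ C₀, ∀ c' ∈ C₀, c ≠ c' → δ₀ * d < (hammingDist c c' : ℝ))
    {x y : G.edgeSet → F} (hx : x ∈ tannerCode G ord C₀) (hy : y ∈ tannerCode G ord C₀) :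
    ∀ v ∈ (G.disagreementGraph x y).support,
      δ₀ * d < (G.disagreementGraph x y).degree v := by
  intro v hv
  rw [← degree_pos_iff_mem_support, ← hammingDist_localWord ord, hammingDist_pos] at hv
  rw [← hammingDist_localWord ord]
  exact hdist _ (hx v) _ (hy v) hv

end Tanner

theorem tanner_unique_decoding_erasures_general
    {n d : ℕ} {F : Type} [Field F] [DecidableEq F]
    (G : SimpleGraph (Fin n)) [DecidableRel G.Adj] (hreg : G.IsRegularOfDegree d)
    (lam δ₀ k : ℝ) (heig : NormSecondEigenvalueLE G d lam)
    (hk : 0 < k) (hlam : lam < δ₀ - 2 / k)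
    (C₀ : Submodule F (Fin d → F))
    (hdist : ∀ c ∈ C₀, ∀ c' ∈ C₀, c ≠ c' → δ₀ * d < (hammingDist c c' : ℝ))
    (ord : ∀ v : Fin n, Fin d ≃ G.neighborSet v)
    (x y : G.edgeSet → F)
    (hx : x ∈ tannerCode G ord C₀) (hy : y ∈ tannerCode G ord C₀)
    (hagree : (({e : G.edgeSet | x e ≠ y e}).ncard : ℝ) ≤ (δ₀ / k) * ((n : ℝ) * d / 2)) :
    x = y := by
  by_contra hne
  set H := G.disagreementGraph x y
  set s : ℝ := (#H.support.toFinset : ℝ)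
  obtain ⟨a, b, hab⟩ := exists_adj_disagreementGraph hne
  have hdeg := lt_degree_disagreementGraph hdist hx hy
  have hexp : δ₀ * d < lam * d + d * s / n :=
    heig.lt_add_card_support_div hreg disagreementGraph_le hdeg hab
  have hcount : δ₀ * d * s < 2 * {e | x e ≠ y e}.ncard := by
    have := mul_card_support_lt_sum_degree hdeg ⟨a, b, hab⟩
    rwa [← Nat.cast_sum, sum_degree_support_eq_twice_card_edges,
      card_edgeFinset_disagreementGraph, Nat.cast_mul, Nat.cast_ofNat] at this
  have hd : (0 : ℝ) < d := by
    exact_mod_cast hreg a ▸ (disagreementGraph_le hab).degree_pos_left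
  have hn : (0 : ℝ) < n := by exact_mod_cast a.pos
  have hlam₀ : 0 ≤ lam :=
    nonneg_of_mul_nonneg_left (heig.mul_nonneg (disagreementGraph_le hab).ne) hd
  have hδ₀ : 0 < δ₀ := by linarith [div_pos two_pos hk]
  have hs : s / n < 1 / k := by
    rw [div_lt_div_iff₀ hn hk, one_mul, ← lt_div_iff₀ hk]
    refine lt_of_mul_lt_mul_left (hcount.trans_le ?_) (by positivity : 0 ≤ δ₀ * d)
    linear_combination 2 * hagree
  have : δ₀ < lam + s / n := lt_of_mul_lt_mul_right (hexp.trans_eq (by ring)) hd.le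
  linarith [show 2 / k = 2 * (1 / k) by ring, one_div_pos.2 hk]

/-- **Linear-time unique decoding of expander codes from erasures** (uniqueness part).
If the inner code `C₀ ⊆ F_q^d` has minimum distance greater than `δ₀·d` (equivalently, it
can recover from any `δ₀·d` erasures), `H` is `d`-regular on `n` vertices with normalized
second eigenvalue at most `lam`, `k > 0`, and `lam < δ₀ − 2/k`, then (for any edge
orderings) any two codewords of the Tanner code `C(H, C₀)` that agree on all but at most
`(δ₀/k)·(nd/2)` edges are equal. -/
theorem tanner_unique_decoding_erasures
    {n d : ℕ} {F : Type} [Field F] [Fintype F] [DecidableEq F]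
    (G : SimpleGraph (Fin n)) [DecidableRel G.Adj] (hreg : G.IsRegularOfDegree d)
    (lam δ₀ k : ℝ) (heig : NormSecondEigenvalueLE G d lam)
    (hk : 0 < k) (hlam : lam < δ₀ - 2 / k)
    (C₀ : Submodule F (Fin d → F))
    (hdist : ∀ c ∈ C₀, ∀ c' ∈ C₀, c ≠ c' → δ₀ * d < (hammingDist c c' : ℝ))
    (ord : ∀ v : Fin n, Fin d ≃ G.neighborSet v)
    (x y : G.edgeSet → F)
    (hx : x ∈ tannerCode G ord C₀) (hy : y ∈ tannerCode G ord C₀)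
    (hagree : (({e : G.edgeSet | x e ≠ y e}).ncard : ℝ) ≤ (δ₀ / k) * ((n : ℝ) * d / 2)) :
    x = y :=
  tanner_unique_decoding_erasures_general G hreg lam δ₀ k heig hk hlam C₀ hdist ord x y hx hy hagree
end

section
/- (List recovery capacity theorem, achievability.) Let R ∈ (0,1), let ℓ ≥ 1 and L ≥ ℓ be integers, let η > 0 satisfy η ≥ 4ℓ/L and R + η ≤ 1, and let q be a prime power with q ≥ ℓ^{2/η}. Then for all sufficiently large n there exists a code C ⊆ F_q^n with |C| ≥ q^{Rn} which is (R + η, ℓ, L)-list recoverable from erasures. -/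
/-! Random coding. Draw `M = L·⌈q^{Rn}⌉` words of `Fⁿ` independently and uniformly. The family
is bad when some box `∏ S i`, with `|S i| = ℓ` on a set `T` of `t = ⌈(R+η)n⌉` coordinates and
`S i = F` elsewhere, contains `L + 1` of the words. Fixed `L + 1` words lie in a fixed box with
probability `(ℓ/q)^{t(L+1)}`, so a union bound over the at most `2ⁿ · C(q,ℓ)^t · C(M, L+1)`
choices gives total probability `≤ (2L)^{L+1} q^{-ηn/2}`, which is `< 1` for large `n`.
A good family repeats no word more than `L` times (take `T` to be everything and each `S i` a
singleton), so it has at least `M / L ≥ q^{Rn}` distinct words. -/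

open Finset Filter

section

variable {κ ι F : Type*} [Fintype κ] [Fintype ι] [Fintype F]

theorem card_piFinset_div_card_pi [DecidableEq ι] {β : ι → Type*} [∀ i, Fintype (β i)]
    (s : ∀ i, Finset (β i)) :
    ((Fintype.piFinset s).card : ℝ) / Fintype.card (∀ i, β i) =
      ∏ i, ((s i).card : ℝ) / Fintype.card (β i) := by
  rw [Fintype.card_piFinset, Fintype.card_pi]
  push_cast
  rw [prod_div_distrib]

section

variable [DecidableEq F]

def IsListRecoverableFamily (x : κ → ι → F) (α : ℝ) (ℓ L : ℕ) : Prop :=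
  ∀ (S : ι → Finset F) (T : Finset ι),
    α * (Fintype.card ι : ℝ) ≤ (T.card : ℝ) →
    (∀ i ∈ T, (S i).card ≤ ℓ) →
    (∀ i ∉ T, S i = univ) →
    #{k | ∀ i, x k i ∈ S i} ≤ L

variable {x : κ → ι → F} {α : ℝ} {ℓ L : ℕ}

theorem IsListRecoverableFamily.listRecoverableErasures_range
    (hx : IsListRecoverableFamily x α ℓ L) : ListRecoverableErasures (Set.range x) α ℓ L := by
  intro S T hT hS hSc
  have himage : {c ∈ Set.range x | ∀ i, c i ∈ S i} =
      x '' ↑({k | ∀ i, x k i ∈ S i} : Finset κ) := by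
    ext c
    simp only [Set.mem_ofPred_eq, Set.mem_range, coe_filter, Set.mem_image, mem_univ, true_and]
    constructor
    · rintro ⟨⟨k, rfl⟩, hk⟩; exact ⟨k, hk, rfl⟩
    · rintro ⟨k, hk, rfl⟩; exact ⟨⟨k, rfl⟩, hk⟩
  rw [himage]
  exact (Set.ncard_image_le (Finset.finite_toSet _)).trans
    ((Set.ncard_coe_finset _).trans_le (hx S T hT hS hSc))

theorem IsListRecoverableFamily.card_le_mul_ncard_range
    (hx : IsListRecoverableFamily x α ℓ L) (hα : α ≤ 1) (hℓ : 1 ≤ ℓ) :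
    Fintype.card κ ≤ L * (Set.range x).ncard := by
  rw [← Set.image_univ, ← coe_univ, ← coe_image, Set.ncard_coe_finset]
  refine card_le_mul_card_image _ _ fun v _ => ?_
  calc #{k | x k = v} ≤ #{k | ∀ i, x k i ∈ ({v i} : Finset F)} :=
        card_le_card fun k => by simp +contextual
    _ ≤ L := hx _ univ (by simpa using mul_le_of_le_one_left (Nat.cast_nonneg _) hα)
        (fun _ _ => by simpa using hℓ) (by simp)

end

section

variable [DecidableEq κ] [DecidableEq ι]

def erasureBoxes (T : Finset ι) (ℓ : ℕ) : Finset (ι → Finset F) :=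
  Fintype.piFinset fun i => if i ∈ T then powersetCard ℓ univ else {univ}

def tuplesInBox (S : ι → Finset F) (I : Finset κ) : Finset (κ → ι → F) :=
  Fintype.piFinset fun k => if k ∈ I then Fintype.piFinset S else univ

theorem card_erasureBoxes (T : Finset ι) (ℓ : ℕ) :
    (erasureBoxes T ℓ : Finset (ι → Finset F)).card = (Fintype.card F).choose ℓ ^ T.card := by
  simp [erasureBoxes, apply_ite card, prod_ite_mem]

theorem card_piFinset_div_of_mem_erasureBoxes [Nonempty F] {T : Finset ι} {S : ι → Finset F}
    (hS : S ∈ erasureBoxes T ℓ) :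
    ((Fintype.piFinset S).card : ℝ) / Fintype.card (ι → F) =
      ((ℓ : ℝ) / Fintype.card F) ^ T.card := by
  have hpos : (0 : ℝ) < Fintype.card F := by exact_mod_cast Fintype.card_pos
  have hcard : ∀ i, ((S i).card : ℝ) / Fintype.card F =
      if i ∈ T then (ℓ : ℝ) / Fintype.card F else 1 := by
    intro i
    have hSi := Fintype.mem_piFinset.mp hS i
    split_ifs at hSi ⊢ with hi
    · rw [(mem_powersetCard.mp hSi).2]
    · rw [mem_singleton.mp hSi, card_univ, div_self hpos.ne']
  rw [card_piFinset_div_card_pi]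
  simp only [hcard, prod_ite_mem, univ_inter, prod_const]

theorem card_tuplesInBox_div [Nonempty F] (S : ι → Finset F) (I : Finset κ) :
    ((tuplesInBox S I).card : ℝ) / Fintype.card (κ → ι → F) =
      (((Fintype.piFinset S).card : ℝ) / Fintype.card (ι → F)) ^ I.card := by
  rw [tuplesInBox, card_piFinset_div_card_pi]
  have hpos : (0 : ℝ) < Fintype.card (ι → F) := by exact_mod_cast Fintype.card_pos
  simp only [apply_ite card, apply_ite (fun n : ℕ => (n : ℝ) / Fintype.card (ι → F)), card_univ,
    div_self hpos.ne', prod_ite_mem, univ_inter, prod_const]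

variable [DecidableEq F] {x : κ → ι → F} {α : ℝ} {ℓ L : ℕ}

theorem exists_mem_tuplesInBox_of_not_isListRecoverableFamily (hℓ : ℓ ≤ Fintype.card F)
    (hx : ¬ IsListRecoverableFamily x α ℓ L) :
    ∃ T ∈ powersetCard ⌈α * Fintype.card ι⌉₊ univ, ∃ S ∈ erasureBoxes T ℓ,
      ∃ I ∈ powersetCard (L + 1) (univ : Finset κ), x ∈ tuplesInBox S I := by
  simp only [IsListRecoverableFamily, not_forall, not_le, exists_prop] at hx
  obtain ⟨S₀, T₀, hT₀, hS₀, -, hL⟩ := hx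
  obtain ⟨T, hTT₀, hT⟩ := exists_subset_card_eq (Nat.ceil_le.mpr hT₀)
  obtain ⟨I, hI, hIcard⟩ := exists_subset_card_eq (Nat.succ_le_of_lt hL)
  have hext : ∀ i, ∃ s : Finset F, S₀ i ⊆ s ∧ (i ∈ T₀ → #s = ℓ) := fun i => by
    by_cases hi : i ∈ T₀
    · obtain ⟨s, hs, hsc⟩ := exists_superset_card_eq (hS₀ i hi) hℓ
      exact ⟨s, hs, fun _ => hsc⟩
    · exact ⟨S₀ i, subset_rfl, fun h => (hi h).elim⟩
  choose S hS₀S hSc using hext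
  refine ⟨T, mem_powersetCard.mpr ⟨subset_univ _, hT⟩,
    fun i => if i ∈ T then S i else univ, ?_, I, mem_powersetCard.mpr ⟨subset_univ _, hIcard⟩, ?_⟩
  · refine Fintype.mem_piFinset.mpr fun i => ?_
    by_cases hi : i ∈ T
    · simp [hi, hSc i (hTT₀ hi)]
    · simp [hi]
  · refine Fintype.mem_piFinset.mpr fun k => ?_
    by_cases hk : k ∈ I
    · have hxk := (mem_filter.mp (hI hk)).2
      simp only [hk, if_true, Fintype.mem_piFinset]
      intro i
      split_ifs
      · exact hS₀S i (hxk i)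
      · exact mem_univ _
    · simp [hk]

theorem exists_isListRecoverableFamily [Nonempty F] (hℓ : ℓ ≤ Fintype.card F)
    (h : ((Fintype.card ι).choose ⌈α * Fintype.card ι⌉₊ : ℝ) *
        (((Fintype.card F).choose ℓ : ℝ) * ((ℓ : ℝ) / Fintype.card F) ^ (L + 1)) ^
          ⌈α * Fintype.card ι⌉₊ * (Fintype.card κ).choose (L + 1) < 1) :
    ∃ x : κ → ι → F, IsListRecoverableFamily x α ℓ L := by
  by_contra! hbad
  set t := ⌈α * Fintype.card ι⌉₊
  set 𝒯 := powersetCard t (univ : Finset ι)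
  set ℐ := powersetCard (L + 1) (univ : Finset κ)
  set N : ℝ := (Fintype.card (κ → ι → F) : ℝ) with hN_def
  have hN : 0 < N := Nat.cast_pos.mpr Fintype.card_pos
  have hcover : (univ : Finset (κ → ι → F)) ⊆ 𝒯.biUnion fun T =>
      (erasureBoxes T ℓ).biUnion fun S => ℐ.biUnion fun I => tuplesInBox S I := fun x _ => by
    obtain ⟨T, hT, S, hS, I, hI, hx⟩ :=
      exists_mem_tuplesInBox_of_not_isListRecoverableFamily hℓ (hbad x)
    simp only [mem_biUnion]
    exact ⟨T, hT, S, hS, I, hI, hx⟩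
  have hbox : ∀ T ∈ 𝒯, ∀ S ∈ (erasureBoxes T ℓ : Finset (ι → Finset F)), ∀ I ∈ ℐ,
      ((tuplesInBox S I : Finset (κ → ι → F)).card : ℝ) =
        (((ℓ : ℝ) / Fintype.card F) ^ t) ^ (L + 1) * N := by
    intro T hT S hS I hI
    rw [← div_eq_iff hN.ne', card_tuplesInBox_div, card_piFinset_div_of_mem_erasureBoxes hS,
      (mem_powersetCard.mp hT).2, (mem_powersetCard.mp hI).2]
  have hcount : (1 : ℝ) * N ≤ ((Fintype.card ι).choose t : ℝ) *
      (((Fintype.card F).choose ℓ : ℝ) * ((ℓ : ℝ) / Fintype.card F) ^ (L + 1)) ^ t *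
        (Fintype.card κ).choose (L + 1) * N := calc
    1 * N ≤ ∑ T ∈ 𝒯, ∑ S ∈ (erasureBoxes T ℓ : Finset (ι → Finset F)), ∑ I ∈ ℐ,
        ((tuplesInBox S I : Finset (κ → ι → F)).card : ℝ) := by
      have := (card_le_card hcover).trans (card_biUnion_le.trans
        (sum_le_sum fun T _ => card_biUnion_le.trans (sum_le_sum fun S _ => card_biUnion_le)))
      rw [card_univ] at this
      rw [one_mul, hN_def]
      exact_mod_cast this
    _ = ∑ T ∈ 𝒯, ∑ S ∈ (erasureBoxes T ℓ : Finset (ι → Finset F)), ∑ I ∈ ℐ,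
        (((ℓ : ℝ) / Fintype.card F) ^ t) ^ (L + 1) * N :=
      sum_congr rfl fun T hT => sum_congr rfl fun S hS => sum_congr rfl fun I hI =>
        hbox T hT S hS I hI
    _ = _ := by
      rw [sum_congr rfl fun T hT => by
        rw [sum_const, sum_const, card_erasureBoxes, (mem_powersetCard.mp hT).2]]
      simp only [sum_const, 𝒯, ℐ, card_powersetCard, card_univ, nsmul_eq_mul]
      push_cast
      ring
  exact absurd (le_of_mul_le_mul_right hcount hN) (not_le.mpr h)

end

end

theorem choose_mul_div_pow_le_rpow {q ℓ L : ℕ} {η : ℝ} (hq : 1 ≤ q)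
    (hℓ : (ℓ : ℝ) ≤ (q : ℝ) ^ (η / 2)) :
    (q.choose ℓ : ℝ) * ((ℓ : ℝ) / q) ^ (L + 1) ≤ (q : ℝ) ^ (ℓ + (η / 2 - 1) * (L + 1)) := by
  have hQ : (0 : ℝ) < q := by exact_mod_cast hq
  have hchoose : (q.choose ℓ : ℝ) ≤ (q : ℝ) ^ (ℓ : ℝ) := by
    rw [Real.rpow_natCast]; exact_mod_cast Nat.choose_le_pow q ℓ
  have hdiv : (ℓ : ℝ) / q ≤ (q : ℝ) ^ (η / 2 - 1) := by
    rw [Real.rpow_sub_one hQ.ne']; gcongr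
  calc (q.choose ℓ : ℝ) * ((ℓ : ℝ) / q) ^ (L + 1)
      ≤ (q : ℝ) ^ (ℓ : ℝ) * ((q : ℝ) ^ (η / 2 - 1)) ^ (L + 1) := by gcongr
    _ = (q : ℝ) ^ (ℓ + (η / 2 - 1) * (L + 1)) := by
      rw [← Real.rpow_mul_natCast hQ.le, ← Real.rpow_add hQ]; push_cast; rfl

theorem listRecovery_union_bound_lt_one {q n ℓ L : ℕ} {R η : ℝ} (hq : 2 ≤ q) (hR : 0 ≤ R)
    (hη : 0 < η) (hRη : R + η ≤ 1) (hℓ : 1 ≤ ℓ) (hL : 4 * ℓ ≤ L * η)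
    (hℓq : (ℓ : ℝ) ≤ (q : ℝ) ^ (η / 2))
    (hn : (2 * L : ℝ) ^ (L + 1) < (q : ℝ) ^ (η / 2 * n)) :
    (n.choose ⌈(R + η) * n⌉₊ : ℝ) *
        ((q.choose ℓ : ℝ) * ((ℓ : ℝ) / q) ^ (L + 1)) ^ ⌈(R + η) * n⌉₊ *
        (L * ⌈(q : ℝ) ^ (R * n)⌉₊).choose (L + 1) < 1 := by
  set Q : ℝ := (q : ℝ)
  set t := ⌈(R + η) * n⌉₊
  set e : ℝ := ℓ + (η / 2 - 1) * (L + 1)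
  have hQ1 : 1 ≤ Q := Nat.one_le_cast.mpr (by omega)
  have hQ0 : 0 < Q := zero_lt_one.trans_le hQ1
  have hℓ' : (1 : ℝ) ≤ ℓ := by exact_mod_cast hℓ
  have hη1 : η ≤ 1 := by linarith
  have hL0 : (0 : ℝ) ≤ L := L.cast_nonneg
  have he : e ≤ 0 := by
    simp only [e]; nlinarith [mul_nonneg hL0 (sub_nonneg.mpr hη1)]
  have hchoose_n : (n.choose t : ℝ) ≤ Q ^ (n : ℝ) := by
    rw [Real.rpow_natCast]
    calc (n.choose t : ℝ) ≤ 2 ^ n := by exact_mod_cast Nat.choose_le_two_pow n t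
      _ ≤ Q ^ n := by gcongr; simp only [Q]; exact_mod_cast hq
  have hcoord : ((q.choose ℓ : ℝ) * ((ℓ : ℝ) / q) ^ (L + 1)) ^ t ≤ Q ^ (e * ((R + η) * n)) :=
    calc ((q.choose ℓ : ℝ) * ((ℓ : ℝ) / q) ^ (L + 1)) ^ t ≤ (Q ^ e) ^ t := by
          gcongr; exact choose_mul_div_pow_le_rpow (by omega) hℓq
      _ = Q ^ (e * t) := (Real.rpow_mul_natCast hQ0.le _ _).symm
      _ ≤ Q ^ (e * ((R + η) * n)) :=
          Real.rpow_le_rpow_of_exponent_le hQ1 (mul_le_mul_of_nonpos_left (Nat.le_ceil _) he)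
  have hchoose_M : ((L * ⌈Q ^ (R * n)⌉₊).choose (L + 1) : ℝ) ≤
      (2 * L) ^ (L + 1) * Q ^ (R * n * (L + 1)) := by
    calc ((L * ⌈Q ^ (R * n)⌉₊).choose (L + 1) : ℝ)
        ≤ ((L * ⌈Q ^ (R * n)⌉₊ : ℕ) : ℝ) ^ (L + 1) := by exact_mod_cast Nat.choose_le_pow _ _
      _ ≤ (2 * L * Q ^ (R * n)) ^ (L + 1) := by
          have hceil := Nat.ceil_le_two_mul
            (by linarith [Real.one_le_rpow hQ1 (by positivity : 0 ≤ R * n)] : 2⁻¹ ≤ Q ^ (R * n))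
          push_cast
          rw [mul_comm 2, mul_assoc]
          gcongr
      _ = (2 * L) ^ (L + 1) * Q ^ (R * n * (L + 1)) := by
          rw [mul_pow, ← Real.rpow_mul_natCast hQ0.le, Nat.cast_add_one]
  have hexp : (n : ℝ) + e * ((R + η) * n) + R * n * (L + 1) ≤ -(η / 2 * n) := by
    have hs : 0 ≤ 1 - (R + η) := sub_nonneg.mpr hRη
    have hcoeff : 1 + e * (R + η) + R * (L + 1) ≤ -(η / 2) := by
      simp only [e]
      nlinarith [mul_nonneg (mul_nonneg (add_nonneg hL0 zero_le_one) hη.le) hs,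
        mul_nonneg (zero_le_one.trans hℓ') hs]
    nlinarith [mul_le_mul_of_nonneg_left hcoeff n.cast_nonneg]
  calc (n.choose t : ℝ) * ((q.choose ℓ : ℝ) * ((ℓ : ℝ) / q) ^ (L + 1)) ^ t *
        (L * ⌈Q ^ (R * n)⌉₊).choose (L + 1)
      ≤ Q ^ (n : ℝ) * Q ^ (e * ((R + η) * n)) *
          ((2 * L) ^ (L + 1) * Q ^ (R * n * (L + 1))) := by gcongr
    _ = (2 * L) ^ (L + 1) * Q ^ ((n : ℝ) + e * ((R + η) * n) + R * n * (L + 1)) := by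
        rw [Real.rpow_add hQ0, Real.rpow_add hQ0]; ring
    _ ≤ (2 * L) ^ (L + 1) * Q ^ (-(η / 2 * n)) := by gcongr
    _ < 1 := by
        rw [Real.rpow_neg hQ0.le, ← div_eq_mul_inv, div_lt_one (by positivity)]; exact hn

theorem eventually_lt_rpow_mul_natCast (C : ℝ) {Q c : ℝ} (hQ : 1 < Q) (hc : 0 < c) :
    ∀ᶠ n : ℕ in atTop, C < Q ^ (c * n) := by
  simp_rw [Real.rpow_mul_natCast (zero_le_one.trans hQ.le)]
  exact (tendsto_pow_atTop_atTop_of_one_lt (Real.one_lt_rpow hQ hc)).eventually_gt_atTop C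

theorem list_recovery_capacity_achievability_general
    (F : Type) [Field F] [Fintype F]
    (R η : ℝ) (hR0 : 0 < R)
    (ℓ L : ℕ) (hℓ : 1 ≤ ℓ) (hL : ℓ ≤ L)
    (hη : 0 < η) (hηL : (4 * ℓ : ℝ) / L ≤ η) (hRη : R + η ≤ 1)
    (hq : (ℓ : ℝ) ^ ((2 : ℝ) / η) ≤ (Fintype.card F : ℝ)) :
    ∃ N : ℕ, ∀ n : ℕ, N ≤ n →
      ∃ C : Set (Fin n → F),
        (Fintype.card F : ℝ) ^ (R * n) ≤ (C.ncard : ℝ) ∧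
        ListRecoverableErasures C (R + η) ℓ L := by
  classical
  set q := Fintype.card F
  have hq2 : 2 ≤ q := Fintype.one_lt_card
  have hL0 : 0 < L := by omega
  have hL4 : 4 * ℓ ≤ L * η :=
    ((div_le_iff₀ (by exact_mod_cast hL0)).mp hηL).trans_eq (mul_comm _ _)
  have hℓq : (ℓ : ℝ) ≤ (q : ℝ) ^ (η / 2) := by
    rw [← inv_div, Real.le_rpow_inv_iff_of_pos ℓ.cast_nonneg q.cast_nonneg (by positivity)]
    exact hq
  have hℓq' : ℓ ≤ q := by
    exact_mod_cast hℓq.trans (Real.rpow_le_self_of_one_le (Nat.one_le_cast.mpr (by omega))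
      (by linarith))
  obtain ⟨N, hN⟩ := eventually_atTop.mp <| eventually_lt_rpow_mul_natCast
    ((2 * L : ℝ) ^ (L + 1)) (Nat.one_lt_cast.mpr hq2) (half_pos hη)
  refine ⟨N, fun n hn => ?_⟩
  obtain ⟨x, hx⟩ := exists_isListRecoverableFamily (κ := Fin (L * ⌈(q : ℝ) ^ (R * n)⌉₊))
    (ι := Fin n) (α := R + η) hℓq' (by
      simpa using listRecovery_union_bound_lt_one hq2 hR0.le hη hRη hℓ hL4 hℓq (hN n hn))
  refine ⟨Set.range x, ?_, hx.listRecoverableErasures_range⟩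
  have hcard := hx.card_le_mul_ncard_range (by linarith) hℓ
  rw [Fintype.card_fin] at hcard
  exact (Nat.le_ceil _).trans (by exact_mod_cast Nat.le_of_mul_le_mul_left hcard hL0)

/-- **List recovery capacity theorem (achievability).**  Let `R ∈ (0,1)`, `ℓ ≥ 1`, `L ≥ ℓ`,
`η ≥ 4ℓ/L` with `R + η ≤ 1`, and let `F` be a finite field of cardinality `q ≥ ℓ^{2/η}`.
Then for all sufficiently large `n` there is a code `C ⊆ F^n` with `|C| ≥ q^{Rn}` which is
`(R + η, ℓ, L)`-list recoverable from erasures. -/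
theorem list_recovery_capacity_achievability
    (F : Type) [Field F] [Fintype F]
    (R η : ℝ) (hR0 : 0 < R) (hR1 : R < 1)
    (ℓ L : ℕ) (hℓ : 1 ≤ ℓ) (hL : ℓ ≤ L)
    (hη : 0 < η) (hηL : (4 * ℓ : ℝ) / L ≤ η) (hRη : R + η ≤ 1)
    (hq : (ℓ : ℝ) ^ ((2 : ℝ) / η) ≤ (Fintype.card F : ℝ)) :
    ∃ N : ℕ, ∀ n : ℕ, N ≤ n →
      ∃ C : Set (Fin n → F),
        (Fintype.card F : ℝ) ^ (R * n) ≤ (C.ncard : ℝ) ∧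
        ListRecoverableErasures C (R + η) ℓ L :=
  list_recovery_capacity_achievability_general F R η hR0 ℓ L hℓ hL hη hηL hRη hq
end

section
/- (Composition preserves list recoverability.) Let q be a prime power and b ≤ d, n positive integers. Let E₀ : F_q^b → F_q^d be an injective map whose image C₀ is (α₀, ℓ, ℓ₁)-list recoverable from erasures. Let C₁ ⊆ F_q^{bn} be a code that is (α₁, ℓ₁, L₁)-list recoverable from erasures. Let G be a d-regular bipartite graph with parts U and V, each of size n, equipped for each vertex with a bijection between Fin d and its incident edges, such that for at least α₁·n of the vertices u ∈ U one has |Γ(u) ∩ A| ≥ (|A|/n − τ)·d for every subset A ⊆ V. Define the composed code C ⊆ (F_q^d)^n as follows: for each codeword y ∈ C₁, split y into n blocks y⁽¹⁾,…,y⁽ⁿ⁾ ∈ F_q^b, encode each block as z⁽ᵘ⁾ = E₀(y⁽ᵘ⁾) ∈ F_q^d for u ∈ U, and redistribute along G: the codeword c ∈ (F_q^d)^n has, for each v ∈ V and each j ∈ Fin d, its symbol c⁽ᵛ⁾_j equal to z⁽ᵘ⁾_i whenever the j-th edge at v equals the i-th edge at u. Then C is (α₀ + τ, ℓ, L₁)-list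 recoverable from erasures as a code over the alphabet F_q^d. -/
/-- **Composition preserves list recoverability** (the construction of Meir / Alon–Luby).

A `d`-regular bipartite graph on parts `U = V = Fin n`, together with a bijection at each
vertex between `Fin d` and its incident edges, is encoded by the "rotation map"
`σ : Fin n × Fin d ≃ Fin n × Fin d`: the `i`-th edge of `u ∈ U` is the `j`-th edge of
`v ∈ V` exactly when `σ (u, i) = (v, j)`.  The neighborhood `Γ(u) ⊆ V` is the image of
`i ↦ (σ (u, i)).1`.

Given an injective encoding `E₀ : F_q^b → F_q^d` whose image `C₀` is `(α₀, ℓ, ℓ₁)`-list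
recoverable from erasures, a code `C₁ ⊆ F_q^{bn}` that is `(α₁, ℓ₁, L₁)`-list recoverable
from erasures, and such a graph in which at least `α₁·n` vertices `u ∈ U` satisfy
`|Γ(u) ∩ A| ≥ (|A|/n − τ)·d` for every `A ⊆ V`, the composed code (split codewords of `C₁`
into `n` blocks of length `b`, encode each block by `E₀`, redistribute along the graph) is
`(α₀ + τ, ℓ, L₁)`-list recoverable from erasures over the alphabet `F_q^d`. -/
theorem composition_list_recoverable
    (F : Type) [Field F] [Fintype F]
    (b d n : ℕ) (hbd : b ≤ d) (hn : 0 < n)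
    (α₀ α₁ τ : ℝ) (ℓ ℓ₁ L₁ : ℕ)
    (E₀ : (Fin b → F) → (Fin d → F)) (hE₀ : Function.Injective E₀)
    (hC₀ : ListRecoverableErasures (Set.range E₀) α₀ ℓ ℓ₁)
    (C₁ : Set (Fin (b * n) → F))
    (hC₁ : ListRecoverableErasures C₁ α₁ ℓ₁ L₁)
    (σ : Fin n × Fin d ≃ Fin n × Fin d)
    (hexp : α₁ * (n : ℝ) ≤
      ((Finset.univ.filter fun u : Fin n =>
        ∀ A : Finset (Fin n),
          ((A.card : ℝ) / n - τ) * d ≤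
            (((Finset.univ.image fun i : Fin d => (σ (u, i)).1) ∩ A).card : ℝ)).card : ℝ)) :
    ListRecoverableErasures
      {c : Fin n → Fin d → F | ∃ y ∈ C₁, c = fun v j =>
        E₀ (fun t : Fin b => y (finProdFinEquiv (t, (σ.symm (v, j)).1)))
          (σ.symm (v, j)).2}
      (α₀ + τ) ℓ L₁ := by
  classical
  intro S T hT hS hSuniv
  have hnR : (0:ℝ) < n := by exact_mod_cast hn
  -- the encoding map
  set enc : (Fin (b*n) → F) → (Fin n → Fin d → F) := fun y v j =>
    E₀ (fun t : Fin b => y (finProdFinEquiv (t, (σ.symm (v, j)).1))) (σ.symm (v, j)).2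
    with henc
  set good : Finset (Fin n) := Finset.univ.filter fun u : Fin n =>
        ∀ A : Finset (Fin n),
          ((A.card : ℝ) / n - τ) * d ≤
            (((Finset.univ.image fun i : Fin d => (σ (u, i)).1) ∩ A).card : ℝ) with hgood
  -- inner constraint sets
  set Sin : Fin n → Fin d → Finset F := fun u i =>
    if (σ (u, i)).1 ∈ T then (S (σ (u, i)).1).image fun s => s (σ (u, i)).2
    else Finset.univ with hSin
  set Tin : Fin n → Finset (Fin d) := fun u =>
    Finset.univ.filter fun i => (σ (u, i)).1 ∈ T with hTin
  -- good vertices see many constrained positions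
  have hα₀ : ∀ u ∈ good, α₀ * (Fintype.card (Fin d) : ℝ) ≤ ((Tin u).card : ℝ) := by
    intro u hu
    have himg : (Finset.univ.image fun i : Fin d => (σ (u, i)).1) ∩ T
        = (Tin u).image fun i => (σ (u, i)).1 := by
      ext v
      simp only [Finset.mem_inter, Finset.mem_image, Finset.mem_univ, true_and,
        hTin, Finset.mem_filter]
      aesop
    have h1 : (((Finset.univ.image fun i : Fin d => (σ (u, i)).1) ∩ T).card : ℝ)
        ≤ ((Tin u).card : ℝ) := by
      rw [himg]; exact_mod_cast Finset.card_image_le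
    rw [hgood, Finset.mem_filter] at hu
    have h2 := hu.2 T
    have h3 : α₀ ≤ (T.card : ℝ) / n - τ := by
      rw [Fintype.card_fin] at hT
      rw [le_sub_iff_add_le, le_div_iff₀ hnR]
      linarith
    have h4 : α₀ * (d : ℝ) ≤ ((T.card : ℝ) / n - τ) * d :=
      mul_le_mul_of_nonneg_right h3 (by positivity)
    rw [Fintype.card_fin]
    linarith
  -- inner list recovery
  have hY : ∀ u ∈ good, {y : Fin b → F | ∀ i, E₀ y i ∈ Sin u i}.ncard ≤ ℓ₁ := by
    intro u hu
    have hZ : {z ∈ Set.range E₀ | ∀ i, z i ∈ Sin u i}.ncard ≤ ℓ₁ := by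
      refine hC₀ (Sin u) (Tin u) (hα₀ u hu) ?_ ?_
      · intro i hi
        rw [hTin, Finset.mem_filter] at hi
        rw [hSin]
        simp only [if_pos hi.2]
        exact le_trans Finset.card_image_le (hS _ hi.2)
      · intro i hi
        rw [hTin, Finset.mem_filter] at hi
        rw [hSin]
        simp only [Finset.mem_univ, true_and] at hi ⊢
        rw [if_neg hi]
    have himg : E₀ '' {y | ∀ i, E₀ y i ∈ Sin u i}
        = {z ∈ Set.range E₀ | ∀ i, z i ∈ Sin u i} := by
      ext z
      constructor
      · rintro ⟨y, hy, rfl⟩; exact ⟨⟨y, rfl⟩, hy⟩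
      · rintro ⟨⟨y, rfl⟩, hz⟩; exact ⟨y, hz, rfl⟩
    calc {y : Fin b → F | ∀ i, E₀ y i ∈ Sin u i}.ncard
        = (E₀ '' {y | ∀ i, E₀ y i ∈ Sin u i}).ncard :=
          (Set.ncard_image_of_injective _ hE₀).symm
      _ ≤ ℓ₁ := himg ▸ hZ
  -- finset version of the inner lists
  set Yfin : Fin n → Finset (Fin b → F) := fun u =>
    Finset.univ.filter fun y => ∀ i, E₀ y i ∈ Sin u i with hYfin
  have hYcard : ∀ u ∈ good, (Yfin u).card ≤ ℓ₁ := by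
    intro u hu
    have hco : ((Yfin u : Finset (Fin b → F)) : Set (Fin b → F))
        = {y | ∀ i, E₀ y i ∈ Sin u i} := by
      ext y; simp [hYfin]
    calc (Yfin u).card = ({y | ∀ i, E₀ y i ∈ Sin u i} : Set (Fin b → F)).ncard := by
          rw [← hco, Set.ncard_coe_finset]
      _ ≤ ℓ₁ := hY u hu
  -- outer constraint sets
  set Sout : Fin (b*n) → Finset F := fun k =>
    if (finProdFinEquiv.symm k).2 ∈ good
    then (Yfin (finProdFinEquiv.symm k).2).image fun y => y (finProdFinEquiv.symm k).1
    else Finset.univ with hSout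
  set Tout : Finset (Fin (b*n)) :=
    Finset.univ.filter fun k => (finProdFinEquiv.symm k).2 ∈ good with hTout
  have hToutcard : Tout.card = b * good.card := by
    have hmap : Tout = (Finset.univ ×ˢ good).map finProdFinEquiv.toEmbedding := by
      ext k
      rw [hTout]
      simp only [Finset.mem_filter, Finset.mem_univ, true_and, Finset.mem_map,
        Finset.mem_product, Equiv.coe_toEmbedding]
      constructor
      · intro h
        refine ⟨finProdFinEquiv.symm k, ?_, finProdFinEquiv.apply_symm_apply k⟩
        simpa using h
      · rintro ⟨p, hp, rfl⟩
        simpa using hp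
    rw [hmap, Finset.card_map, Finset.card_product, Finset.card_univ, Fintype.card_fin]
  -- outer list recovery
  have hYout : {y ∈ C₁ | ∀ k, y k ∈ Sout k}.ncard ≤ L₁ := by
    refine hC₁ Sout Tout ?_ ?_ ?_
    · rw [hToutcard, Fintype.card_fin]
      rw [hgood] at hexp
      push_cast
      calc α₁ * ((b:ℝ) * n) = (b:ℝ) * (α₁ * n) := by ring
        _ ≤ (b:ℝ) * good.card := by
            refine mul_le_mul_of_nonneg_left ?_ (by positivity)
            exact_mod_cast hexp
    · intro k hk
      rw [hTout, Finset.mem_filter] at hk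
      rw [hSout]
      simp only [if_pos hk.2]
      exact le_trans Finset.card_image_le (hYcard _ hk.2)
    · intro k hk
      rw [hTout, Finset.mem_filter] at hk
      simp only [Finset.mem_univ, true_and] at hk
      rw [hSout]
      simp only [if_neg hk]
  -- injectivity of the encoding
  have hencInj : Function.Injective enc := by
    intro y y' h
    have hblock : ∀ u : Fin n,
        (fun t : Fin b => y (finProdFinEquiv (t, u)))
        = (fun t : Fin b => y' (finProdFinEquiv (t, u))) := by
      intro u
      apply hE₀
      funext i
      have h2 := congrFun (congrFun h (σ (u, i)).1) (σ (u, i)).2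
      rw [henc] at h2
      simpa only [Prod.mk.eta, Equiv.symm_apply_apply] using h2
    funext k
    have h3 := congrFun (hblock (finProdFinEquiv.symm k).2) (finProdFinEquiv.symm k).1
    simpa only [Prod.mk.eta, Equiv.apply_symm_apply] using h3
  -- the constrained composed codewords are images of constrained outer codewords
  have key : {c ∈ {c : Fin n → Fin d → F | ∃ y ∈ C₁, c = fun v j =>
        E₀ (fun t : Fin b => y (finProdFinEquiv (t, (σ.symm (v, j)).1)))
          (σ.symm (v, j)).2} | ∀ i, c i ∈ S i}
      ⊆ enc '' {y ∈ C₁ | ∀ k, y k ∈ Sout k} := by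
    rintro c ⟨⟨y, hyC, hcdef⟩, hcS⟩
    have hcenc : c = enc y := hcdef
    refine ⟨y, ⟨hyC, ?_⟩, hcenc.symm⟩
    intro k
    rw [hSout]
    by_cases hk : (finProdFinEquiv.symm k).2 ∈ good
    · simp only [if_pos hk]
      rw [Finset.mem_image]
      refine ⟨fun t => y (finProdFinEquiv (t, (finProdFinEquiv.symm k).2)), ?_, ?_⟩
      · rw [hYfin]
        simp only [Finset.mem_filter, Finset.mem_univ, true_and]
        intro i
        set u := (finProdFinEquiv.symm k).2 with hu
        rw [hSin]
        by_cases hv : (σ (u, i)).1 ∈ T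
        · simp only [if_pos hv]
          rw [Finset.mem_image]
          refine ⟨c (σ (u, i)).1, hcS _, ?_⟩
          rw [hcenc, henc]
          simp only [Prod.mk.eta, Equiv.symm_apply_apply]
        · simp [hv]
      · exact congrArg y (finProdFinEquiv.apply_symm_apply k)
    · simp only [if_neg hk]
      exact Finset.mem_univ _
  calc {c ∈ {c : Fin n → Fin d → F | ∃ y ∈ C₁, c = fun v j =>
        E₀ (fun t : Fin b => y (finProdFinEquiv (t, (σ.symm (v, j)).1)))
          (σ.symm (v, j)).2} | ∀ i, c i ∈ S i}.ncard
      ≤ (enc '' {y ∈ C₁ | ∀ k, y k ∈ Sout k}).ncard :=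
        Set.ncard_le_ncard key (Set.toFinite _)
    _ = {y ∈ C₁ | ∀ k, y k ∈ Sout k}.ncard := Set.ncard_image_of_injective _ hencInj
    _ ≤ L₁ := hYout
end

section
/- (Existence of a large subgraph with large local equivalence classes.) Let H be a d-regular graph on n vertices, F_q a finite field, ℓ, L positive integers, and ε > 0. Suppose we are given a set Good ⊆ V(H) of vertices, a set GE ⊆ E(H) of edges, and for each v ∈ Good a set S_v of vectors indexed by the neighborhood Γ(v) with entries in F_q, satisfying: (i) |S_v| ≤ L for every v ∈ Good; (ii) for every v ∈ Good and every edge (v,u) ∈ GE, |{c_u : c ∈ S_v}| ≤ ℓ; (iii) the number of edges of H that are not in GE or have an endpoint not in Good is at most ε·ℓ^L·(nd/2). For v ∈ Good and edges (v,u), (v,u') ∈ GE, say u ∼_v u' if there is a permutation π of F_q with π(c_u) = c_{u'} for every c ∈ S_v, and let 𝓔(v,u) = {(v,u') ∈ GE : u' ∼_v u}; for all other edges set 𝓔(v,u) = {(v,u)}. Then there exists a subset E' ⊆ E(H) with |E'| ≥ (nd/2)·(1 − 3ε·ℓ^L) such that for every edge of E' and each of its endpoints v (with other endpoint u), |𝓔(v,u)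 ∩ E'| ≥ ε·d. -/
open Finset

section RkLemmas
variable {F : Type} [LinearOrder F]

/-- The rank of `x` within a finset `s`: the number of elements of `s` below `x`. -/
def rk (s : Finset F) (x : F) : ℕ := (s.filter (fun y => y < x)).card

lemma rk_lt_card {s : Finset F} {x : F} (hx : x ∈ s) : rk s x < s.card := by
  have h : s.filter (fun y => y < x) ⊆ s.erase x := by
    intro y hy
    simp only [mem_filter] at hy
    exact mem_erase.2 ⟨ne_of_lt hy.2, hy.1⟩
  calc rk s x ≤ (s.erase x).card := Finset.card_le_card h
    _ < s.card := Finset.card_erase_lt_of_mem hx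

lemma rk_lt_rk {s : Finset F} {x y : F} (hx : x ∈ s) (hxy : x < y) :
    rk s x < rk s y := by
  apply Finset.card_lt_card
  rw [Finset.ssubset_iff_of_subset]
  · exact ⟨x, mem_filter.2 ⟨hx, hxy⟩, fun h => absurd (mem_filter.1 h).2 (lt_irrefl x)⟩
  · intro z hz
    simp only [mem_filter] at hz ⊢
    exact ⟨hz.1, hz.2.trans hxy⟩

lemma rk_injOn {s : Finset F} {x y : F} (hx : x ∈ s) (hy : y ∈ s)
    (h : rk s x = rk s y) : x = y := by
  rcases lt_trichotomy x y with hlt | heq | hgt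
  · exact absurd h (Nat.ne_of_lt (rk_lt_rk hx hlt))
  · exact heq
  · exact absurd h.symm (Nat.ne_of_lt (rk_lt_rk hy hgt))

lemma rk_orderEmbOfFin (s : Finset F) {k : ℕ} (h : s.card = k) (i : Fin k) :
    rk s (s.orderEmbOfFin h i) = i := by
  have himg : s.filter (fun y => y < s.orderEmbOfFin h i) =
      (Finset.Iio i).image (s.orderEmbOfFin h) := by
    ext y
    simp only [mem_filter, Finset.mem_image, Finset.mem_Iio]
    constructor
    · rintro ⟨hys, hlt⟩
      have : y ∈ Set.range (s.orderEmbOfFin h) := by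
        rw [Finset.range_orderEmbOfFin]; exact hys
      obtain ⟨j, rfl⟩ := this
      exact ⟨j, (s.orderEmbOfFin h).strictMono.lt_iff_lt.1 hlt, rfl⟩
    · rintro ⟨j, hj, rfl⟩
      exact ⟨Finset.orderEmbOfFin_mem s h j, (s.orderEmbOfFin h).strictMono hj⟩
  rw [rk, himg, Finset.card_image_of_injective _ (s.orderEmbOfFin h).injective,
    Fin.card_Iio]

/-- Extension of rank-matching between two equicardinal finsets to a permutation. -/
lemma exists_perm_rk [Fintype F] [DecidableEq F] {s t : Finset F}
    (hst : s.card = t.card) :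
    ∃ π : Equiv.Perm F, ∀ x ∈ s, ∀ y ∈ t, rk s x = rk t y → π x = y := by
  classical
  have ht : t.card = s.card := hst.symm
  set e : {x // x ∈ s} ≃ {x // x ∈ t} :=
    ((s.orderIsoOfFin rfl).symm.trans (t.orderIsoOfFin ht)).toEquiv with he
  refine ⟨e.extendSubtype, fun x hx y hy hrk => ?_⟩
  rw [Equiv.extendSubtype_apply_of_mem e x hx]
  set i : Fin s.card := (s.orderIsoOfFin rfl).symm ⟨x, hx⟩ with hi
  have hxi : s.orderEmbOfFin rfl i = x := by
    have := (s.orderIsoOfFin rfl).apply_symm_apply ⟨x, hx⟩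
    rw [← hi] at this
    exact congrArg Subtype.val this
  have hrx : rk s x = i := by rw [← hxi]; exact rk_orderEmbOfFin s rfl i
  have key : (e ⟨x, hx⟩ : F) = t.orderEmbOfFin ht i := by
    show ((t.orderIsoOfFin ht) ((s.orderIsoOfFin rfl).symm ⟨x, hx⟩) : F) = _
    rw [← hi, Finset.coe_orderIsoOfFin_apply]
  have hrt : rk t (e ⟨x, hx⟩ : F) = i := by rw [key]; exact rk_orderEmbOfFin t ht i
  apply rk_injOn (s := t) (e ⟨x, hx⟩).2 hy
  rw [hrt, ← hrx, hrk]

end RkLemmas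

/-- Local equivalence of neighbors `u, u'` at a vertex `v`, relative to a set `Good` of
vertices, a set `GE` of edges, and for each vertex `v` a set `S v` of vectors indexed by the
neighborhood of `v`: it requires `v ∈ Good`, both edges `(v,u)` and `(v,u')` to be edges of
`G` lying in `GE`, and a permutation `π` of the alphabet with `π (c u) = c u'` for all
`c ∈ S v`. -/
def LocalEquiv {n : ℕ} {F : Type*} (G : SimpleGraph (Fin n))
    (Good : Set (Fin n)) (GE : Set (Sym2 (Fin n)))
    (S : ∀ v : Fin n, Set (G.neighborSet v → F))
    (v u u' : Fin n) : Prop :=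
  v ∈ Good ∧ ∃ (hu : G.Adj v u) (hu' : G.Adj v u'),
    s(v, u) ∈ GE ∧ s(v, u') ∈ GE ∧
    ∃ π : Equiv.Perm F, ∀ c ∈ S v, π (c ⟨u, hu⟩) = c ⟨u', hu'⟩

/-- The local equivalence class `𝓔(v,u)` of the edge `(v,u)` at the endpoint `v`: all edges
`(v,u')` of `GE` with `u' ∼_v u`, together with `(v,u)` itself (so that the class of an edge
not covered by the local-equivalence conditions is the trivial class `{(v,u)}`). -/
def EqClass {n : ℕ} {F : Type*} (G : SimpleGraph (Fin n))
    (Good : Set (Fin n)) (GE : Set (Sym2 (Fin n)))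
    (S : ∀ v : Fin n, Set (G.neighborSet v → F))
    (v u : Fin n) : Set (Sym2 (Fin n)) :=
  {e | e = s(v, u) ∨ ∃ u', LocalEquiv G Good GE S v u u' ∧ e = s(v, u')}

section Defs
open scoped Classical
variable {n : ℕ} {F : Type} [Fintype F] [LinearOrder F]
variable (G : SimpleGraph (Fin n)) [DecidableRel G.Adj]
variable (GE : Set (Sym2 (Fin n))) (S : ∀ v : Fin n, Set (G.neighborSet v → F))
variable (Good : Set (Fin n))

/-- The finset of values `c u` over `c ∈ S v`. -/
noncomputable def Vals (v u : Fin n) : Finset F :=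
  if h : G.Adj v u then
    Set.Finite.toFinset (Set.toFinite ((fun c : G.neighborSet v → F => c ⟨u, h⟩) '' S v))
  else ∅

/-- The rank invariant of the neighbor `u` of `v`. -/
noncomputable def fInv (v u : Fin n) : S v → ℕ :=
  if h : G.Adj v u then fun c => rk (Vals G S v u) (c.1 ⟨u, h⟩) else fun _ => 0

lemma mem_Vals {v u : Fin n} (h : G.Adj v u) {x : F} :
    x ∈ Vals G S v u ↔ ∃ c ∈ S v, c ⟨u, h⟩ = x := by
  rw [Vals, dif_pos h, Set.Finite.mem_toFinset]
  simp [Set.mem_image]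

lemma fInv_apply {v u : Fin n} (h : G.Adj v u) (c : S v) :
    fInv G S v u c = rk (Vals G S v u) (c.1 ⟨u, h⟩) := by
  rw [fInv, dif_pos h]

lemma Vals_eq_image {v u : Fin n} (h : G.Adj v u) :
    Vals G S v u = Finset.image (fun c : S v => c.1 ⟨u, h⟩) Finset.univ := by
  ext x
  simp only [mem_Vals G S h, Finset.mem_image, Finset.mem_univ, true_and]
  exact ⟨fun ⟨c, hc, hx⟩ => ⟨⟨c, hc⟩, hx⟩, fun ⟨c, hx⟩ => ⟨c.1, c.2, hx⟩⟩

lemma Vals_card_eq {v u : Fin n} (h : G.Adj v u) :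
    (Vals G S v u).card = (Finset.image (fInv G S v u) Finset.univ).card := by
  have h1 : (Vals G S v u).card
      = ((Vals G S v u).image (rk (Vals G S v u))).card := by
    rw [Finset.card_image_of_injOn]
    intro x hx y hy hxy
    exact rk_injOn hx hy hxy
  rw [h1]
  congr 1
  have h2 : Finset.image (fInv G S v u) Finset.univ
      = Finset.image (rk (Vals G S v u))
        (Finset.image (fun c : S v => c.1 ⟨u, h⟩) Finset.univ) := by
    rw [Finset.image_image]
    apply Finset.image_congr
    intro c _
    exact fInv_apply G S h c
  rw [h2, ← Vals_eq_image G S h]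

/-- Equal invariants imply local equivalence. -/
lemma localEquiv_of_fInv_eq {v u u' : Fin n} (hv : v ∈ Good) (hu : G.Adj v u)
    (hu' : G.Adj v u') (hge : s(v, u) ∈ GE) (hge' : s(v, u') ∈ GE)
    (h : fInv G S v u = fInv G S v u') :
    LocalEquiv G Good GE S v u u' := by
  refine ⟨hv, hu, hu', hge, hge', ?_⟩
  have hcard : (Vals G S v u).card = (Vals G S v u').card := by
    rw [Vals_card_eq G S hu, Vals_card_eq G S hu', h]
  obtain ⟨π, hπ⟩ := exists_perm_rk hcard
  refine ⟨π, fun c hc => ?_⟩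
  apply hπ
  · exact (mem_Vals G S hu).2 ⟨c, hc, rfl⟩
  · exact (mem_Vals G S hu').2 ⟨c, hc, rfl⟩
  · have h1 := fInv_apply G S hu ⟨c, hc⟩
    have h2 := fInv_apply G S hu' ⟨c, hc⟩
    rw [← h1, ← h2, h]

/-- GE-neighbors of `v`. -/
noncomputable def Nbrs (v : Fin n) : Finset (Fin n) :=
  (G.neighborFinset v).filter (fun u => s(v, u) ∈ GE)

lemma mem_Nbrs {v u : Fin n} : u ∈ Nbrs G GE v ↔ G.Adj v u ∧ s(v, u) ∈ GE := by
  simp [Nbrs]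

/-- The set of invariants appearing at `v`. -/
noncomputable def TT (v : Fin n) : Finset (↥(S v) → ℕ) :=
  (Nbrs G GE v).image (fInv G S v)

/-- The edges of class `t` at `v`. -/
noncomputable def classE (v : Fin n) (t : ↥(S v) → ℕ) :
    Finset (Sym2 (Fin n)) :=
  ((Nbrs G GE v).filter (fun u => fInv G S v u = t)).image (fun u => s(v, u))

lemma classE_subset_eqClass {v u : Fin n} (hv : v ∈ Good) (hu : G.Adj v u)
    (hge : s(v, u) ∈ GE) :
    (classE G GE S v (fInv G S v u) : Set (Sym2 (Fin n))) ⊆ EqClass G Good GE S v u := by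
  intro e he
  simp only [classE, Finset.coe_image, Set.mem_image, Finset.mem_coe,
    Finset.mem_filter] at he
  obtain ⟨u', ⟨hn, hf⟩, rfl⟩ := he
  rw [mem_Nbrs] at hn
  exact Or.inr ⟨u', localEquiv_of_fInv_eq G GE S Good hv hu hn.1 hge hn.2 hf.symm, rfl⟩

lemma TT_card_le (ℓ L : ℕ) (hℓ : 0 < ℓ) (v : Fin n)
    (hiS : (S v).ncard ≤ L)
    (hii : ∀ u : Fin n, ∀ hu : G.Adj v u, s(v, u) ∈ GE →
      ((fun c : G.neighborSet v → F => c ⟨u, hu⟩) '' S v).ncard ≤ ℓ) :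
    (TT G GE S v).card ≤ ℓ ^ L := by
  have hlt : ∀ t ∈ TT G GE S v, ∀ c : S v, t c < ℓ := by
    intro t ht c
    simp only [TT, Finset.mem_image] at ht
    obtain ⟨u, hu, rfl⟩ := ht
    rw [mem_Nbrs] at hu
    obtain ⟨hadj, hge⟩ := hu
    rw [fInv_apply G S hadj]
    have hmem : c.1 ⟨u, hadj⟩ ∈ Vals G S v u := (mem_Vals G S hadj).2 ⟨c.1, c.2, rfl⟩
    have h1 : rk (Vals G S v u) (c.1 ⟨u, hadj⟩) < (Vals G S v u).card := rk_lt_card hmem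
    have h2 : (Vals G S v u).card ≤ ℓ := by
      rw [Vals, dif_pos hadj, ← Set.ncard_eq_toFinset_card]
      exact hii u hadj hge
    omega
  calc (TT G GE S v).card ≤ (Finset.univ : Finset (↥(S v) → Fin ℓ)).card := by
        apply Finset.card_le_card_of_injOn
          (fun t c => (⟨min (t c) (ℓ - 1), by omega⟩ : Fin ℓ))
        · intro t _; exact Finset.mem_univ _
        · intro t ht t' ht' h
          funext c
          have h1 := congrFun h c
          have ht1 := hlt t ht c
          have ht2 := hlt t' ht' c
          simp only [Fin.mk.injEq] at h1
          omega
    _ = ℓ ^ (S v).ncard := by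
        rw [Finset.card_univ, Fintype.card_fun, Fintype.card_fin,
          ← Nat.card_coe_set_eq, Nat.card_eq_fintype_card]
    _ ≤ ℓ ^ L := Nat.pow_le_pow_right hℓ hiS

/-- The potential function. -/
noncomputable def Phi (m : ℕ) (A : Finset (Sym2 (Fin n))) : ℕ :=
  ∑ v ∈ Finset.univ.filter (· ∈ Good),
    ∑ t ∈ TT G GE S v, min ((classE G GE S v t ∩ A).card) m

end Defs

/-- **Existence of a large subgraph with large local equivalence classes.**
If `H` is `d`-regular on `n` vertices, `|S v| ≤ L` for good `v`, every edge `(v,u) ∈ GE` at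
a good `v` has list-cover size `|{c u : c ∈ S v}| ≤ ℓ`, and at most `ε·ℓ^L·(nd/2)` edges are
bad (not in `GE` or with an endpoint outside `Good`), then there is a set `E'` of edges with
`|E'| ≥ (nd/2)(1 − 3ε·ℓ^L)` such that every edge of `E'`, viewed from either endpoint `v`
(with other endpoint `u`), satisfies `|𝓔(v,u) ∩ E'| ≥ ε·d`. -/
theorem exists_subgraph_large_local_classes
    {n d : ℕ} {F : Type} [Field F] [Fintype F]
    (G : SimpleGraph (Fin n)) [DecidableRel G.Adj] (hreg : G.IsRegularOfDegree d)
    (ℓ L : ℕ) (hℓ : 0 < ℓ) (hL : 0 < L) (ε : ℝ) (hε : 0 < ε)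
    (Good : Set (Fin n)) (GE : Set (Sym2 (Fin n)))
    (S : ∀ v : Fin n, Set (G.neighborSet v → F))
    (hi : ∀ v ∈ Good, (S v).ncard ≤ L)
    (hii : ∀ v : Fin n, v ∈ Good → ∀ u : Fin n, ∀ hu : G.Adj v u, s(v, u) ∈ GE →
      ((fun c : G.neighborSet v → F => c ⟨u, hu⟩) '' S v).ncard ≤ ℓ)
    (hiii : (({e ∈ G.edgeSet | e ∉ GE ∨ ∃ v ∈ e, v ∉ Good}).ncard : ℝ) ≤
      ε * (ℓ : ℝ) ^ L * ((n : ℝ) * d / 2)) :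
    ∃ E' ⊆ G.edgeSet,
      ((n : ℝ) * d / 2) * (1 - 3 * ε * (ℓ : ℝ) ^ L) ≤ (E'.ncard : ℝ) ∧
      ∀ e ∈ E', ∀ v u : Fin n, G.Adj v u → e = s(v, u) →
        ε * d ≤ (((EqClass G Good GE S v u) ∩ E').ncard : ℝ) := by
  classical
  letI : LinearOrder F :=
    LinearOrder.lift' (Fintype.equivFin F) (Fintype.equivFin F).injective
  set m : ℕ := ⌈ε * d⌉₊ - 1 with hm
  set GoodF : Finset (Sym2 (Fin n)) :=
    G.edgeFinset.filter (fun e => e ∈ GE ∧ ∀ v ∈ e, v ∈ Good) with hGoodF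
  -- the key deletion process, by strong induction
  have key : ∀ N : ℕ, ∀ A : Finset (Sym2 (Fin n)), A.card ≤ N → A ⊆ GoodF →
      ∃ B, B ⊆ A ∧
        (∀ e ∈ B, ∀ v u : Fin n, G.Adj v u → e = s(v, u) →
          ε * d ≤ (((EqClass G Good GE S v u) ∩ (B : Set (Sym2 (Fin n)))).ncard : ℝ)) ∧
        A.card ≤ B.card + Phi G GE S Good m A := by
    intro N
    induction N with
    | zero =>
      intro A hA _
      have : A = ∅ := Finset.card_eq_zero.1 (Nat.le_zero.1 hA)
      subst this
      exact ⟨∅, Finset.Subset.refl _, by simp, by simp⟩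
    | succ N ih =>
      intro A hA hAG
      by_cases hPA : ∀ e ∈ A, ∀ v u : Fin n, G.Adj v u → e = s(v, u) →
          ε * d ≤ (((EqClass G Good GE S v u) ∩ (A : Set (Sym2 (Fin n)))).ncard : ℝ)
      · exact ⟨A, Finset.Subset.refl _, hPA, Nat.le_add_right _ _⟩
      · push_neg at hPA
        obtain ⟨e, he, v, u, hadj, rfl, hlt⟩ := hPA
        -- facts about the bad edge
        have heG : s(v, u) ∈ GoodF := hAG he
        rw [hGoodF, Finset.mem_filter] at heG
        have hge : s(v, u) ∈ GE := heG.2.1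
        have hvG : v ∈ Good := heG.2.2 v (by simp)
        have huN : u ∈ Nbrs G GE v := (mem_Nbrs G GE).2 ⟨hadj, hge⟩
        set t0 := fInv G S v u with ht0
        have hein : s(v, u) ∈ classE G GE S v t0 ∩ A := by
          rw [Finset.mem_inter]
          refine ⟨?_, he⟩
          rw [classE, Finset.mem_image]
          exact ⟨u, Finset.mem_filter.2 ⟨huN, rfl⟩, rfl⟩
        -- the class at (v, t0) is small
        have hsmall : (classE G GE S v t0 ∩ A).card ≤ m := by
          have hsub : ((classE G GE S v t0 ∩ A : Finset (Sym2 (Fin n))) : Set (Sym2 (Fin n)))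
              ⊆ (EqClass G Good GE S v u) ∩ (A : Set (Sym2 (Fin n))) := by
            intro x hx
            rw [Finset.coe_inter] at hx
            exact ⟨classE_subset_eqClass G GE S Good hvG hadj hge hx.1, hx.2⟩
          have hfin : ((EqClass G Good GE S v u) ∩ (A : Set (Sym2 (Fin n)))).Finite :=
            Set.Finite.subset (A.finite_toSet) Set.inter_subset_right
          have hle := Set.ncard_le_ncard hsub hfin
          rw [Set.ncard_coe_finset] at hle
          have : ((classE G GE S v t0 ∩ A).card : ℝ) < ε * d :=
            lt_of_le_of_lt (by exact_mod_cast hle) hlt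
          have h2 : (classE G GE S v t0 ∩ A).card < ⌈ε * d⌉₊ := Nat.lt_ceil.2 this
          omega
        -- the potential strictly decreases upon deleting the bad edge
        have hstep : Phi G GE S Good m (A.erase s(v, u)) < Phi G GE S Good m A := by
          apply Finset.sum_lt_sum
          · intro v' _
            apply Finset.sum_le_sum
            intro t _
            exact min_le_min (Finset.card_le_card
              (Finset.inter_subset_inter (Finset.Subset.refl _) (Finset.erase_subset _ _)))
              (le_refl m)
          · refine ⟨v, by simp [hvG], ?_⟩
            apply Finset.sum_lt_sum
            · intro t _
              exact min_le_min (Finset.card_le_card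
                (Finset.inter_subset_inter (Finset.Subset.refl _) (Finset.erase_subset _ _)))
                (le_refl m)
            · refine ⟨t0, ?_, ?_⟩
              · rw [TT, Finset.mem_image]; exact ⟨u, huN, rfl⟩
              · have h1 : classE G GE S v t0 ∩ A.erase s(v, u)
                    = (classE G GE S v t0 ∩ A).erase s(v, u) := by
                  ext x
                  simp only [Finset.mem_inter, Finset.mem_erase]
                  tauto
                have hpos : 1 ≤ (classE G GE S v t0 ∩ A).card :=
                  Finset.card_pos.2 ⟨_, hein⟩
                rw [h1, Finset.card_erase_of_mem hein]
                rw [min_eq_left hsmall, min_eq_left (by omega)]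
                omega
        have hAe : (A.erase s(v, u)).card ≤ N := by
          rw [Finset.card_erase_of_mem he]
          omega
        obtain ⟨B, hBsub, hPB, hcount⟩ :=
          ih (A.erase s(v, u)) hAe ((Finset.erase_subset _ _).trans hAG)
        refine ⟨B, hBsub.trans (Finset.erase_subset _ _), hPB, ?_⟩
        have hce : (A.erase s(v, u)).card = A.card - 1 := Finset.card_erase_of_mem he
        have hApos : 1 ≤ A.card := Finset.card_pos.2 ⟨_, he⟩
        omega
  -- edge count of the regular graph
  have hedge : n * d = 2 * G.edgeFinset.card := by
    have h1 := SimpleGraph.sum_degrees_eq_twice_card_edges G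
    have h2 : ∑ v : Fin n, G.degree v = n * d := by
      rw [Finset.sum_congr rfl (fun v _ => hreg v), Finset.sum_const,
        Finset.card_univ, Fintype.card_fin, smul_eq_mul]
    omega
  have hEcard : (G.edgeFinset.card : ℝ) = (n : ℝ) * d / 2 := by
    have : ((n * d : ℕ) : ℝ) = ((2 * G.edgeFinset.card : ℕ) : ℝ) := by exact_mod_cast hedge
    push_cast at this
    linarith
  -- bad edges
  set BadF : Finset (Sym2 (Fin n)) :=
    G.edgeFinset.filter (fun e => ¬(e ∈ GE ∧ ∀ v ∈ e, v ∈ Good)) with hBadF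
  have hBadset : {e ∈ G.edgeSet | e ∉ GE ∨ ∃ v ∈ e, v ∉ Good} = (BadF : Set (Sym2 (Fin n))) := by
    ext e
    simp only [Set.mem_setOf_eq, hBadF, Finset.coe_filter, SimpleGraph.mem_edgeFinset,
      not_and_or, not_forall, Classical.not_imp, exists_prop]
  have hBadcard : ((BadF.card : ℝ)) ≤ ε * (ℓ : ℝ) ^ L * ((n : ℝ) * d / 2) := by
    rw [hBadset, Set.ncard_coe_finset] at hiii
    exact hiii
  have hsplit : GoodF.card + BadF.card = G.edgeFinset.card :=
    Finset.card_filter_add_card_filter_not _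
  -- potential bound
  have hPhi : Phi G GE S Good m GoodF ≤ n * (ℓ ^ L * m) := by
    calc Phi G GE S Good m GoodF
        ≤ ∑ v ∈ Finset.univ.filter (· ∈ Good), ℓ ^ L * m := by
          apply Finset.sum_le_sum
          intro v hv
          rw [Finset.mem_filter] at hv
          calc ∑ t ∈ TT G GE S v, min ((classE G GE S v t ∩ GoodF).card) m
              ≤ ∑ _t ∈ TT G GE S v, m := Finset.sum_le_sum (fun t _ => min_le_right _ _)
            _ = (TT G GE S v).card * m := by rw [Finset.sum_const, smul_eq_mul]
            _ ≤ ℓ ^ L * m := Nat.mul_le_mul_right m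
                (TT_card_le G GE S ℓ L hℓ v (hi v hv.2) (hii v hv.2))
      _ ≤ n * (ℓ ^ L * m) := by
          rw [Finset.sum_const, smul_eq_mul]
          apply Nat.mul_le_mul_right
          calc (Finset.univ.filter (· ∈ Good)).card ≤ (Finset.univ : Finset (Fin n)).card :=
                Finset.card_filter_le _ _
            _ = n := by rw [Finset.card_univ, Fintype.card_fin]
  -- m ≤ ε d
  have hmd : (m : ℝ) ≤ ε * d := by
    have hnn : (0:ℝ) ≤ ε * d := by positivity
    rcases Nat.eq_zero_or_pos ⌈ε * d⌉₊ with h0 | hpos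
    · have : m = 0 := by omega
      rw [this]; exact_mod_cast hnn
    · have hcast : (m : ℝ) = (⌈ε * d⌉₊ : ℝ) - 1 := by
        rw [hm]
        push_cast [hpos]
        ring
      have := Nat.ceil_lt_add_one hnn
      linarith
  -- apply the key lemma
  obtain ⟨B, hBsub, hPB, hcount⟩ := key GoodF.card GoodF (le_refl _) (Finset.Subset.refl _)
  refine ⟨(B : Set (Sym2 (Fin n))), ?_, ?_, ?_⟩
  · intro e heB
    have := hBsub (Finset.mem_coe.1 heB)
    rw [hGoodF, Finset.mem_filter, SimpleGraph.mem_edgeFinset] at this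
    exact this.1
  · rw [Set.ncard_coe_finset]
    have h1 : (GoodF.card : ℝ) ≤ (B.card : ℝ) + ((n : ℝ) * ((ℓ:ℝ) ^ L * m)) := by
      have hc : (GoodF.card : ℝ) ≤ (B.card : ℝ) + (Phi G GE S Good m GoodF : ℝ) := by
        exact_mod_cast hcount
      have hp : ((Phi G GE S Good m GoodF : ℕ) : ℝ) ≤ (n : ℝ) * ((ℓ:ℝ) ^ L * m) := by
        exact_mod_cast hPhi
      linarith
    have h2 : (GoodF.card : ℝ) = (n : ℝ) * d / 2 - (BadF.card : ℝ) := by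
      have : ((GoodF.card + BadF.card : ℕ) : ℝ) = ((G.edgeFinset.card : ℕ) : ℝ) := by
        exact_mod_cast hsplit
      push_cast at this
      linarith [hEcard]
    have h4 : (n : ℝ) * ((ℓ:ℝ) ^ L * m) ≤ (n : ℝ) * ((ℓ:ℝ) ^ L * (ε * d)) := by
      apply mul_le_mul_of_nonneg_left _ (by positivity)
      apply mul_le_mul_of_nonneg_left hmd (by positivity)
    have hring : (n : ℝ) * ((ℓ:ℝ) ^ L * (ε * d)) = 2 * (ε * (ℓ:ℝ) ^ L * ((n : ℝ) * d / 2)) := by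
      ring
    have hring2 : (n : ℝ) * d / 2 * (1 - 3 * ε * (ℓ:ℝ) ^ L)
        = (n : ℝ) * d / 2 - 3 * (ε * (ℓ:ℝ) ^ L * ((n : ℝ) * d / 2)) := by
      ring
    linarith
  · intro e heB v u hadj heq
    exact hPB e (Finset.mem_coe.1 heB) v u hadj heq
end

section
/- (Propagation of agreement along global equivalence classes.) Let H be a d-regular graph on n vertices with edge orderings, C₀ ⊆ F_q^d a linear code, and C(H, C₀) the associated Tanner code. Suppose we are given a set Good ⊆ V(H), a set GE ⊆ E(H), for each v ∈ Good a set S_v of vectors indexed by Γ(v) with entries in F_q, and define local equivalence u ∼_v u' (for v ∈ Good and (v,u),(v,u') ∈ GE) to mean that some permutation π of F_q satisfies π(c_u) = c_{u'} for all c ∈ S_v; define two edges of GE with all endpoints in Good to be globally equivalent if they are connected by a chain of edges in GE through vertices of Good in which each consecutive pair of edges is locally equivalent at its shared vertex. Let x, x' ∈ C(H, C₀) be codewords such that for every v ∈ Good the restriction of each of x and x' to the edges at v (as a vector indexed by Γ(v)) lies in S_v. If x and x' assign the same symbol to some edge e ∈ GE with both endpoints in Good, then x and x' assign the same symbol to every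 edge in the global equivalence class of e. -/
/-- The restriction of an edge-assignment `x` to the edges at `v`, as a vector indexed by
the neighborhood `Γ(v)`. -/
def restrictAt {n : ℕ} {F : Type*} (G : SimpleGraph (Fin n))
    (x : G.edgeSet → F) (v : Fin n) : G.neighborSet v → F :=
  fun u => x (⟨s(v, (u : Fin n)), u.2⟩ : G.edgeSet)

/-- Global equivalence of two edges: they are connected by a chain of edges
`(w₀,w₁), (w₁,w₂), …, (w_{m−1},w_m)` of `GE` through vertices of `Good` in which each
consecutive pair of edges is locally equivalent at its shared vertex. -/
def GlobalEquiv {n : ℕ} {F : Type*} (G : SimpleGraph (Fin n))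
    (Good : Set (Fin n)) (GE : Set (Sym2 (Fin n)))
    (S : ∀ v : Fin n, Set (G.neighborSet v → F))
    (e e' : Sym2 (Fin n)) : Prop :=
  ∃ (m : ℕ) (w : ℕ → Fin n), 1 ≤ m ∧
    (∀ i ≤ m, w i ∈ Good) ∧
    (∀ i < m, G.Adj (w i) (w (i + 1)) ∧ s(w i, w (i + 1)) ∈ GE) ∧
    (∀ i : ℕ, i + 2 ≤ m → LocalEquiv G Good GE S (w (i + 1)) (w i) (w (i + 2))) ∧
    e = s(w 0, w 1) ∧ e' = s(w (m - 1), w m)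

/-- **Propagation of agreement along global equivalence classes.** Let `x, x'` be codewords
of the Tanner code `C(H, C₀)` whose restriction to the edges at each good vertex `v` lies in
`S v`.  If `x` and `x'` agree on an edge `e ∈ GE` whose endpoints are both good, then they
agree on every edge of the global equivalence class of `e`. -/
theorem agreement_propagates
    {n d : ℕ} {F : Type} [Field F] [Fintype F]
    (G : SimpleGraph (Fin n)) [DecidableRel G.Adj] (hreg : G.IsRegularOfDegree d)
    (ord : ∀ v : Fin n, Fin d ≃ G.neighborSet v)
    (C₀ : Submodule F (Fin d → F))
    (Good : Set (Fin n)) (GE : Set (Sym2 (Fin n)))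
    (S : ∀ v : Fin n, Set (G.neighborSet v → F))
    (x x' : G.edgeSet → F)
    (hx : x ∈ tannerCode G ord C₀) (hx' : x' ∈ tannerCode G ord C₀)
    (hxS : ∀ v ∈ Good, restrictAt G x v ∈ S v)
    (hx'S : ∀ v ∈ Good, restrictAt G x' v ∈ S v)
    (e : G.edgeSet) (heGE : (e : Sym2 (Fin n)) ∈ GE)
    (heGood : ∀ v ∈ (e : Sym2 (Fin n)), v ∈ Good)
    (hagree : x e = x' e)
    (e' : G.edgeSet) (hglob : GlobalEquiv G Good GE S (e : Sym2 (Fin n)) (e' : Sym2 (Fin n))) :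
    x e' = x' e' := by
  obtain ⟨m, w, hm, hGood, hadj, hloc, he, he'⟩ := hglob
  have key : ∀ i, ∀ hi : i < m,
      x ⟨s(w i, w (i+1)), (hadj i hi).1⟩ = x' ⟨s(w i, w (i+1)), (hadj i hi).1⟩ := by
    intro i
    induction i with
    | zero =>
      intro hi
      have heq : e = ⟨s(w 0, w 1), (hadj 0 hi).1⟩ := Subtype.ext he
      rw [← heq]; exact hagree
    | succ i ih =>
      intro hi
      have hi' : i < m := Nat.lt_of_succ_lt hi
      obtain ⟨hvG, hu, hu', hge1, hge2, π, hπ⟩ := hloc i hi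
      have hx1 := hπ _ (hxS _ hvG)
      have hx2 := hπ _ (hx'S _ hvG)
      have hedge : (⟨s(w i, w (i+1)), (hadj i hi').1⟩ : G.edgeSet)
          = ⟨s(w (i+1), w i), hu⟩ := Subtype.ext Sym2.eq_swap
      have hih := ih hi'
      rw [hedge] at hih
      have h1 : π (x ⟨s(w (i+1), w i), hu⟩) = x ⟨s(w (i+1), w (i+2)), hu'⟩ := hx1
      have h2 : π (x' ⟨s(w (i+1), w i), hu⟩) = x' ⟨s(w (i+1), w (i+2)), hu'⟩ := hx2
      have : x ⟨s(w (i+1), w (i+2)), hu'⟩ = x' ⟨s(w (i+1), w (i+2)), hu'⟩ := by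
        rw [← h1, ← h2, hih]
      exact this
  obtain ⟨k, rfl⟩ : ∃ k, m = k + 1 := ⟨m - 1, by omega⟩
  have hlt : k < k + 1 := by omega
  have h := key k hlt
  have heq : e' = ⟨s(w k, w (k+1)), (hadj k hlt).1⟩ := by
    apply Subtype.ext
    simpa using he'
  rw [heq]
  exact h
end
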